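/- Let Σ be a finite alphabet, G a group, K a subgroup of G, and ψ : Σ → G a map such that ψ(Σ) generates G as a semigroup; extend ψ to a monoid homomorphism ψ : Σ* → G. Then the word problem L = L(G,K,ψ) = {w ∈ Σ* : ψ(w) ∈ K} is growth sensitive: for every finite non-empty set F ⊆ Σ*∖{ε}, one has h(L^F) < h(L) strictly. -/
import Mathlib


namespace PaperFormal

variable {A : Type*}

/-- `w` contains no factor (contiguous subword) belonging to `F`. -/
def Avoids (F : Set (List A)) (w : List A) : Prop := ∀ v ∈ F, ¬ v <:+: w

/-- Logarithm with the convention `log r = -∞` for `r ≤ 0`. -/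
noncomputable def elog (r : ℝ) : EReal := if r ≤ 0 then ⊥ else ((Real.log r : ℝ) : EReal)

/-- The entropy (exponential growth rate) of a language, with values in `[-∞, ∞)`. -/
noncomputable def entropy (L : Set (List A)) : EReal :=
  Filter.atTop.limsup fun n : ℕ =>
    (((n : ℝ)⁻¹ : ℝ) : EReal) * elog ((Set.ncard {w ∈ L | w.length = n} : ℕ) : ℝ)

end PaperFormal

namespace S11
open PaperFormal
variable {A : Type*}

def glue (z : List A) (m : ℕ) : List Bool → List A → List A
  | [], w => w
  | b :: bs, w => w.take m ++ (if b then z else []) ++ glue z m bs (w.drop m)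

theorem glue_length (z : List A) (m : ℕ) (bs : List Bool) (w : List A) :
    (glue z m bs w).length = w.length + z.length * (bs.count true) := by
  induction bs generalizing w with
  | nil => simp [glue]
  | cons b bs ih =>
      simp only [glue, List.length_append, ih, List.count_cons]
      cases b <;>
        simp [List.length_take, List.length_drop, Nat.mul_succ, Nat.mul_add] <;> omega

theorem glue_prod {G : Type*} [Group G] (ψ : A → G) {z : List A}
    (hz : (z.map ψ).prod = 1) (m : ℕ) (bs : List Bool) (w : List A) :
    ((glue z m bs w).map ψ).prod = (w.map ψ).prod := by
  induction bs generalizing w with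
  | nil => simp [glue]
  | cons b bs ih =>
      simp only [glue, List.map_append, List.prod_append, ih]
      have : (w.map ψ).prod = ((w.take m).map ψ).prod * ((w.drop m).map ψ).prod := by
        rw [← List.prod_append, ← List.map_append, List.take_append_drop]
      rw [this]
      cases b <;> simp [hz]

theorem glue_take (z : List A) (m : ℕ) (bs : List Bool) (w : List A) :
    ∃ r, glue z m bs w = w.take m ++ r := by
  cases bs with
  | nil => exact ⟨w.drop m, (List.take_append_drop m w).symm⟩
  | cons b bs =>
      exact ⟨(if b then z else []) ++ glue z m bs (w.drop m), by simp [glue]⟩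

theorem glue_no_v {m : ℕ} {v z : List A} (hvz : v <+: z) {w : List A}
    (hle : v.length ≤ w.length)
    (hm : v.length ≤ m) (hav : ¬ v <:+: w) (bs : List Bool) (X : List A) :
    z ++ X ≠ glue z m bs w := by
  intro h
  obtain ⟨r, hr⟩ := glue_take z m bs w
  have hpre : v <+: (w.take m ++ r) := by
    rw [← hr, ← h]
    exact hvz.trans (List.prefix_append z X)
  have hlen : v.length ≤ (w.take m).length := by
    simp [List.length_take]; omega
  have hvw : v <+: w.take m :=
    List.prefix_of_prefix_length_le hpre (List.prefix_append _ r) hlen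
  exact hav ((hvw.trans (List.take_prefix m w)).isInfix)

theorem glue_inj {m : ℕ} {v z : List A} (hvz : v <+: z) (hv1 : 1 ≤ v.length)
    (hm : v.length ≤ m) :
    ∀ (bs bs' : List Bool) (w w' : List A), bs.length = bs'.length →
    w.length = w'.length → (bs.length + 1) * m ≤ w.length →
    ¬ v <:+: w → ¬ v <:+: w' →
    glue z m bs w = glue z m bs' w' → w = w' ∧ bs = bs' := by
  intro bs
  induction bs with
  | nil =>
      intro bs' w w' hlen _ _ _ _ hg
      rw [List.length_nil] at hlen
      rw [List.length_eq_zero_iff.mp hlen.symm] at hg ⊢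
      exact ⟨hg, rfl⟩
  | cons b bs ih =>
      rintro (_ | ⟨b', bs'⟩) w w' hlen hw hsz hav hav' hg
      · simp at hlen
      · have hmw : m ≤ w.length := by
          have : 1 * m ≤ ((b :: bs).length + 1) * m :=
            Nat.mul_le_mul_right m (by simp)
          omega
        have hmw' : m ≤ w'.length := hw ▸ hmw
        simp only [glue, List.append_assoc] at hg
        have htl : (w.take m).length = (w'.take m).length := by
          simp [List.length_take]; omega
        obtain ⟨htake, hg2⟩ := List.append_inj hg htl
        -- now compare the inserted parts
        have h2m : 2 * m ≤ w.length := by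
          have : 2 * m ≤ ((b :: bs).length + 1) * m :=
            Nat.mul_le_mul_right m (by simp)
          omega
        have hdroplen : v.length ≤ (w'.drop m).length := by
          simp only [List.length_drop]; omega
        have hdroplen' : v.length ≤ (w.drop m).length := by
          simp only [List.length_drop]; omega
        have havd : ¬ v <:+: (w.drop m) := fun h =>
          hav (h.trans (List.drop_suffix m w).isInfix)
        have havd' : ¬ v <:+: (w'.drop m) := fun h =>
          hav' (h.trans (List.drop_suffix m w').isInfix)
        have hwd : (w.drop m).length = (w'.drop m).length := by
          rw [List.length_drop, List.length_drop, hw]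
        have hszd : (bs.length + 1) * m ≤ (w.drop m).length := by
          rw [List.length_drop]
          have := hsz
          rw [List.length_cons] at this
          have expand : (bs.length + 1 + 1) * m = (bs.length + 1) * m + m := by ring
          omega
        have hrecfin : ∀ (cs' : List Bool), bs.length = cs'.length →
            glue z m bs (w.drop m) = glue z m cs' (w'.drop m) →
            w = w' ∧ b :: bs = b :: cs' := by
          intro cs' hlen2 hg3
          have hrec := ih cs' (w.drop m) (w'.drop m) hlen2 hwd hszd havd havd' hg3
          refine ⟨?_, by rw [hrec.2]⟩
          rw [← List.take_append_drop m w, ← List.take_append_drop m w', htake, hrec.1]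
        cases b <;> cases b' <;>
          simp only [if_true, Bool.false_eq_true, if_false, List.nil_append] at hg2
        · exact hrecfin bs' (by simpa using hlen) hg2
        · exact absurd hg2.symm (glue_no_v hvz hdroplen' hm havd bs _)
        · exact absurd hg2 (glue_no_v hvz hdroplen hm havd' bs' _)
        · have h3 := List.append_cancel_left hg2
          exact hrecfin bs' (by simpa using hlen) h3

def encBlock (E : ℕ) (c : Fin E) : List Bool :=
  List.replicate c.1 false ++ true :: List.replicate (E - 1 - c.1) false

def enc {E : ℕ} : List (Fin E) → List Bool
  | [] => []
  | c :: cs => encBlock E c ++ enc cs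

theorem encBlock_length {E : ℕ} (c : Fin E) : (encBlock E c).length = E := by
  have := c.2
  simp [encBlock]; omega

theorem enc_length {E : ℕ} (cs : List (Fin E)) : (enc cs).length = E * cs.length := by
  induction cs with
  | nil => simp [enc]
  | cons c cs ih => simp [enc, encBlock_length, ih, Nat.mul_succ]; ring

theorem enc_count {E : ℕ} (cs : List (Fin E)) : (enc cs).count true = cs.length := by
  induction cs with
  | nil => simp [enc]
  | cons c cs ih =>
      simp [enc, encBlock, List.count_append, ih, List.count_replicate]

theorem encBlock_append_ne {E : ℕ} {c c' : Fin E} (hcc : c.1 < c'.1) (L L' : List Bool) :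
    encBlock E c ++ L ≠ encBlock E c' ++ L' := by
  intro h
  have hidx : c.1 < (encBlock E c ++ L).length := by
    rw [List.length_append, encBlock_length]
    exact Nat.lt_of_lt_of_le c.2 (by simp)
  have h1 : (encBlock E c ++ L)[c.1] = true := by
    simp only [encBlock, List.append_assoc]
    rw [List.getElem_append_right (by simp)]
    simp
  have hidx2 : c.1 < (encBlock E c' ++ L').length := h ▸ hidx
  have h2 : (encBlock E c' ++ L')[c.1] = false := by
    simp only [encBlock, List.append_assoc]
    rw [List.getElem_append_left (by simp; exact hcc)]
    simp
  have h3 := (List.getElem_of_eq h.symm hidx2).trans h1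
  have := h2.symm.trans h3
  simp at this

theorem enc_inj {E : ℕ} : ∀ (cs cs' : List (Fin E)), enc cs = enc cs' → cs = cs' := by
  intro cs
  induction cs with
  | nil =>
      intro cs' h
      cases cs' with
      | nil => rfl
      | cons c cs' => exact absurd h.symm (by simp [enc, encBlock])
  | cons c cs ih =>
      intro cs' h
      cases cs' with
      | nil => exact absurd h (by simp [enc, encBlock])
      | cons c' cs' =>
          simp only [enc] at h
          have hcc : c = c' := by
            rcases Nat.lt_trichotomy c.1 c'.1 with hlt | heq | hgt
            · exact absurd h (encBlock_append_ne hlt _ _)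
            · exact Fin.ext heq
            · exact absurd h.symm (encBlock_append_ne hgt _ _)
          subst hcc
          have := List.append_cancel_left h
          rw [ih cs' this]
noncomputable def cnt (L : Set (List A)) (n : ℕ) : ℕ := {w ∈ L | w.length = n}.ncard

noncomputable def fterm (L : Set (List A)) (n : ℕ) : EReal :=
  (((n : ℝ)⁻¹ : ℝ) : EReal) * elog ((cnt L n : ℕ) : ℝ)

theorem entropy_eq (L : Set (List A)) : entropy L = Filter.atTop.limsup (fterm L) := rfl

theorem elog_of_one_le {k : ℕ} (hk : 1 ≤ k) : elog (k : ℝ) = ((Real.log k : ℝ) : EReal) := by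
  rw [elog, if_neg]
  push_neg
  exact_mod_cast hk

theorem elog_nat_zero : elog ((0 : ℕ) : ℝ) = ⊥ := by
  rw [elog, if_pos]; norm_num

theorem cnt_le_card_pow [Fintype A] (L : Set (List A)) (n : ℕ) :
    cnt L n ≤ Fintype.card A ^ n := by
  classical
  have h1 : {w ∈ L | w.length = n} ⊆ {l : List A | l.length = n} := fun w hw => hw.2
  refine (Set.ncard_le_ncard h1 (List.finite_length_eq A n)).trans ?_
  rw [← Nat.card_coe_set_eq]
  have e : ↥{l : List A | l.length = n} ≃ List.Vector A n :=
    Equiv.subtypeEquivRight (fun _ => Iff.rfl)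
  rw [Nat.card_congr e, Nat.card_eq_fintype_card, card_vector]

theorem fterm_le [Fintype A] [Nonempty A] (L : Set (List A)) (n : ℕ) :
    fterm L n ≤ ((Real.log (Fintype.card A) : ℝ) : EReal) := by
  have hcard : (1 : ℝ) ≤ Fintype.card A := by exact_mod_cast Fintype.card_pos
  have hlogc : 0 ≤ Real.log (Fintype.card A) := Real.log_nonneg hcard
  rcases Nat.eq_zero_or_pos n with rfl | hn
  · rw [fterm]
    norm_num
    exact_mod_cast hlogc
  rcases Nat.eq_zero_or_pos (cnt L n) with hz | hpos
  · rw [fterm, hz, elog_nat_zero, EReal.coe_mul_bot_of_pos]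
    · exact bot_le
    · positivity
  · rw [fterm, elog_of_one_le hpos, ← EReal.coe_mul, EReal.coe_le_coe_iff]
    have h1 : Real.log (cnt L n) ≤ n * Real.log (Fintype.card A) := by
      rw [← Real.log_pow]
      apply Real.log_le_log (by exact_mod_cast hpos)
      exact_mod_cast cnt_le_card_pow L n
    calc (n : ℝ)⁻¹ * Real.log (cnt L n) ≤ (n : ℝ)⁻¹ * (n * Real.log (Fintype.card A)) := by
          apply mul_le_mul_of_nonneg_left h1 (by positivity)
      _ = Real.log (Fintype.card A) := by
          field_simp

theorem entropy_le [Fintype A] [Nonempty A] (L : Set (List A)) :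
    entropy L ≤ ((Real.log (Fintype.card A) : ℝ) : EReal) := by
  rw [entropy_eq]
  exact Filter.limsup_le_of_le (by isBoundedDefault)
    (Filter.Eventually.of_forall (fterm_le L))

theorem fterm_nonneg {L : Set (List A)} {n : ℕ} (h : 1 ≤ cnt L n) : (0 : EReal) ≤ fterm L n := by
  rw [fterm, elog_of_one_le h, ← EReal.coe_mul]
  apply EReal.coe_nonneg.mpr
  have : 0 ≤ Real.log (cnt L n) := Real.log_nonneg (by exact_mod_cast h)
  positivity

theorem main_count [Fintype A] {G : Type*} [Group G] (K : Subgroup G) (ψ : A → G)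
    (F : Set (List A)) {v z : List A} (hvF : v ∈ F) (hvz : v <+: z)
    (hv1 : 1 ≤ v.length) (hz : (z.map ψ).prod = 1) (E s n : ℕ)
    (hsz : (E * s + 1) * v.length ≤ n) :
    cnt {w : List A | (w.map ψ).prod ∈ K ∧ Avoids F w} n * E ^ s
      ≤ cnt {w : List A | (w.map ψ).prod ∈ K} (n + z.length * s) := by
  classical
  unfold cnt
  set m := v.length with hmdef
  set S : Set (List A) := {w ∈ {w : List A | (w.map ψ).prod ∈ K ∧ Avoids F w} | w.length = n} with hS
  set U : Set (List A) := {w ∈ {w : List A | (w.map ψ).prod ∈ K} | w.length = n + z.length * s} with hU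
  have hSfin : S.Finite := (List.finite_length_eq A n).subset (fun w hw => hw.2)
  have hUfin : U.Finite := (List.finite_length_eq A _).subset (fun w hw => hw.2)
  set Φ : List A × (Fin s → Fin E) → List A :=
    fun p => glue z m (enc (List.ofFn p.2)) p.1 with hΦ
  set P : Finset (List A × (Fin s → Fin E)) := hSfin.toFinset ×ˢ Finset.univ with hP
  have hmaps : ∀ p ∈ P, Φ p ∈ hUfin.toFinset := by
    rintro ⟨w, c⟩ hp
    rw [hP, Finset.mem_product, Set.Finite.mem_toFinset] at hp
    rw [Set.Finite.mem_toFinset]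
    obtain ⟨⟨⟨hK, _⟩, hlen⟩, -⟩ := hp
    constructor
    · show ((glue z m (enc (List.ofFn c)) w).map ψ).prod ∈ K
      rw [glue_prod ψ hz]; exact hK
    · rw [hΦ]
      simp only [glue_length, enc_count, List.length_ofFn, hlen]
  have hinj : Set.InjOn Φ P := by
    rintro ⟨w, c⟩ hp ⟨w', c'⟩ hp' heq
    rw [hP, Finset.mem_coe, Finset.mem_product, Set.Finite.mem_toFinset] at hp hp'
    obtain ⟨⟨⟨-, hav⟩, hlen⟩, -⟩ := hp
    obtain ⟨⟨⟨-, hav'⟩, hlen'⟩, -⟩ := hp'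
    have hbslen : (enc (List.ofFn c)).length = (enc (List.ofFn c')).length := by
      rw [enc_length, enc_length, List.length_ofFn, List.length_ofFn]
    have hwsz : ((enc (List.ofFn c)).length + 1) * m ≤ w.length := by
      rw [enc_length, List.length_ofFn, hlen]; exact hsz
    obtain ⟨hww, hee⟩ := glue_inj hvz hv1 le_rfl _ _ _ _ hbslen
      (hlen.trans hlen'.symm) hwsz (hav v hvF) (hav' v hvF) heq
    have : List.ofFn c = List.ofFn c' := enc_inj _ _ hee
    exact Prod.ext hww (List.ofFn_injective this)
  have hcard : P.card = S.ncard * E ^ s := by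
    rw [hP, Finset.card_product, Finset.card_univ, Fintype.card_fun,
      Fintype.card_fin, Fintype.card_fin, Set.ncard_eq_toFinset_card S hSfin]
  calc S.ncard * E ^ s = P.card := hcard.symm
    _ = (P.image Φ).card := (Finset.card_image_of_injOn hinj).symm
    _ ≤ hUfin.toFinset.card := Finset.card_le_card (by
        intro x hx
        obtain ⟨p, hp, rfl⟩ := Finset.mem_image.mp hx
        exact hmaps p hp)
    _ = U.ncard := (Set.ncard_eq_toFinset_card U hUfin).symm
theorem key_estimate [Fintype A] {G : Type*} [Group G] (K : Subgroup G) (ψ : A → G)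
    (F : Set (List A)) {v z : List A} (hvF : v ∈ F) (hvz : v <+: z)
    (hv1 : 1 ≤ v.length) (hz : (z.map ψ).prod = 1) (hvzlen : v.length ≤ z.length)
    (E : ℕ) (hE2 : 2 ≤ E) {c δ H : ℝ} (hcH : c ≤ H) (hH : 0 ≤ H)
    (hlogE : H * z.length + 1 ≤ Real.log E)
    (hδ : δ = 1 / (4 * v.length * E * (1 + z.length)))
    (n : ℕ) (hn : 4 * v.length * E ≤ n)
    (hc : (c : EReal) < fterm {w : List A | (w.map ψ).prod ∈ K ∧ Avoids F w} n) :
    ((c + δ : ℝ) : EReal) ≤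
      fterm {w : List A | (w.map ψ).prod ∈ K} (n + z.length * (n / (2 * v.length * E))) := by
  classical
  set m := v.length with hm
  set t := z.length with ht
  set s := n / (2 * m * E) with hs
  set LF : Set (List A) := {w | (w.map ψ).prod ∈ K ∧ Avoids F w} with hLF
  set L : Set (List A) := {w | (w.map ψ).prod ∈ K} with hL
  set N := n + t * s with hN
  have hmpos : 0 < m := hv1
  have hEpos : 0 < E := by omega
  have h2mE : 0 < 2 * m * E := Nat.mul_pos (Nat.mul_pos (by omega) hmpos) hEpos
  have h4mE : 0 < 4 * m * E := Nat.mul_pos (Nat.mul_pos (by omega) hmpos) hEpos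
  have hn1 : 1 ≤ n := le_trans h4mE hn
  have ht1 : 1 ≤ t := le_trans hv1 hvzlen
  -- s bounds
  have h24 : 2 * m * E ≤ 4 * m * E := Nat.mul_le_mul_right E (by omega)
  have hs1 : 1 ≤ s := by
    rw [hs, Nat.one_le_div_iff h2mE]
    omega
  have hsn : s ≤ n := by rw [hs]; exact Nat.div_le_self n _
  have hdivlt : n < (s + 1) * (2 * m * E) := by
    rw [hs, add_mul, one_mul]
    have h1 := Nat.div_add_mod' n (2 * m * E)
    have h2 := Nat.mod_lt n h2mE
    omega
  -- (E*s+1)*m ≤ n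
  have hsz : (E * s + 1) * m ≤ n := by
    have h1 : s * (2 * m * E) ≤ n := Nat.div_mul_le_self n _
    have h2 : (E * s + 1) * m ≤ s * (2 * m * E) := by nlinarith [hs1, hv1, hE2]
    omega
  -- n ≤ 4mE * s
  have hn4s : n ≤ 4 * m * E * s := by
    have e2 : n * 2 < 4 * m * E * s + 4 * m * E := by
      calc n * 2 < (s + 1) * (2 * m * E) * 2 := by omega
        _ = 4 * m * E * s + 4 * m * E := by ring
    omega
  -- from hc : cnt LF n ≥ 1 and log bound
  have hnR : (0 : ℝ) < (n : ℝ) := by exact_mod_cast hn1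
  have ha1 : 1 ≤ cnt LF n := by
    by_contra hcon
    push_neg at hcon
    have h0 : cnt LF n = 0 := by omega
    rw [fterm, h0, elog_nat_zero, EReal.coe_mul_bot_of_pos (by positivity)] at hc
    exact absurd hc (by simp)
  have hclog : c * n < Real.log (cnt LF n) := by
    rw [fterm, elog_of_one_le ha1, ← EReal.coe_mul, EReal.coe_lt_coe_iff] at hc
    calc c * n = ((n:ℝ) * c) := by ring
      _ < (n:ℝ) * ((n:ℝ)⁻¹ * Real.log (cnt LF n)) := mul_lt_mul_of_pos_left hc hnR
      _ = Real.log (cnt LF n) := by field_simp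
  -- counting
  have hcount : cnt LF n * E ^ s ≤ cnt L N := main_count K ψ F hvF hvz hv1 hz E s n hsz
  have hb1 : 1 ≤ cnt L N :=
    le_trans (Nat.one_le_iff_ne_zero.mpr
      (Nat.mul_ne_zero (by omega) (pow_ne_zero _ (by omega)))) hcount
  have hE0 : (0:ℝ) < E := by exact_mod_cast hEpos
  have hblog : c * n + s * Real.log E ≤ Real.log (cnt L N) := by
    have h1 : Real.log ((cnt LF n : ℝ) * (E:ℝ) ^ s) ≤ Real.log (cnt L N) := by
      apply Real.log_le_log (by positivity)
      calc ((cnt LF n : ℝ) * (E:ℝ) ^ s) = ((cnt LF n * E ^ s : ℕ) : ℝ) := by push_cast; ring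
        _ ≤ _ := by exact_mod_cast hcount
    rw [Real.log_mul (by positivity) (by positivity), Real.log_pow] at h1
    have h2 : Real.log (cnt LF n) + s * Real.log E ≤ Real.log (cnt L N) := by
      exact_mod_cast h1
    linarith [hclog]
  -- final real inequality
  have hNn : (N : ℝ) = (n : ℝ) + t * s := by rw [hN]; push_cast; ring
  have hNpos : (0 : ℝ) < N := by rw [hNn]; positivity
  have hmR : (1:ℝ) ≤ m := by exact_mod_cast hv1
  have hER : (2:ℝ) ≤ E := by exact_mod_cast hE2
  have htR : (1:ℝ) ≤ t := by exact_mod_cast ht1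
  have hδpos : 0 < δ := by rw [hδ]; positivity
  have hsge : (n : ℝ) / (4 * m * E) ≤ s := by
    rw [div_le_iff₀ (by positivity)]
    calc (n:ℝ) ≤ ((4 * m * E * s : ℕ) : ℝ) := by exact_mod_cast hn4s
      _ = (s:ℝ) * (4 * m * E) := by push_cast; ring
  have hδN : δ * N ≤ s := by
    have hNle : (N : ℝ) ≤ n * (1 + t) := by
      have h7 : (t : ℝ) * s ≤ t * n := by
        apply mul_le_mul_of_nonneg_left _ (by positivity)
        exact_mod_cast hsn
      rw [hNn]; nlinarith [h7]
    calc δ * N ≤ δ * (n * (1 + t)) := by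
          apply mul_le_mul_of_nonneg_left hNle (le_of_lt hδpos)
      _ = (n : ℝ) / (4 * m * E * (1 + t)) * (1 + t) := by rw [hδ]; ring
      _ = (n : ℝ) / (4 * m * E) := by
          rw [div_mul_eq_mul_div, mul_comm (4 * (m:ℝ) * E) (1 + (t:ℝ)), ← div_div,
            mul_div_assoc, div_self (by positivity), mul_one]
      _ ≤ s := hsge
  have hctH : c * t ≤ H * t := mul_le_mul_of_nonneg_right hcH (by positivity)
  have hfactor : (1:ℝ) ≤ Real.log E - c * t := by linarith [hlogE]
  have hkey : (c + δ) * N ≤ c * n + s * Real.log E := by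
    have h1 : δ * N ≤ s * (Real.log E - c * t) := by
      calc δ * N ≤ (s:ℝ) := hδN
        _ = s * 1 := by ring
        _ ≤ s * (Real.log E - c * t) := by
            apply mul_le_mul_of_nonneg_left hfactor (by positivity)
    have h2 : (c + δ) * (N:ℝ) = c * n + c * ((t:ℝ) * s) + δ * N := by rw [hNn]; ring
    have hexp : (s:ℝ) * (Real.log E - c * t) = s * Real.log E - c * ((t:ℝ) * s) := by ring
    rw [h2]
    linarith [hexp ▸ h1]
  -- conclude
  have h6 : (c + δ) * N ≤ Real.log (cnt L N) := le_trans hkey hblog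
  have hfinal : c + δ ≤ (N:ℝ)⁻¹ * Real.log (cnt L N) := by
    rw [← div_eq_inv_mul]
    rw [le_div_iff₀ hNpos]
    exact h6
  rw [fterm, elog_of_one_le hb1, ← EReal.coe_mul]
  exact EReal.coe_le_coe_iff.mpr hfinal

end S11

open PaperFormal

/-- Let `ψ : Σ → G` be such that `ψ(Σ)` generates the group `G` as a
semigroup, and let `K ≤ G` be a subgroup. Then the word problem
`L(G,K,ψ) = {w ∈ Σ* : ψ(w) ∈ K}` is growth sensitive: forbidding any finite nonempty set
`F ⊆ Σ⁺` of factors strictly decreases the entropy. -/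
theorem statement11 {A : Type*} [Fintype A] {G : Type*} [Group G]
    (K : Subgroup G) (ψ : A → G)
    (hgen : ∀ g : G, ∃ w : List A, w ≠ [] ∧ (w.map ψ).prod = g)
    (F : Set (List A)) (hFfin : F.Finite) (hFne : F.Nonempty)
    (hFeps : ∀ v ∈ F, v ≠ ([] : List A)) :
    entropy {w : List A | (w.map ψ).prod ∈ K ∧ Avoids F w}
      < entropy {w : List A | (w.map ψ).prod ∈ K} := by
  classical
  obtain ⟨w₀, hw₀ne, hw₀⟩ := hgen 1
  have hA : Nonempty A := by
    cases w₀ with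
    | nil => exact absurd rfl hw₀ne
    | cons a _ => exact ⟨a⟩
  obtain ⟨v, hvF⟩ := hFne
  have hv1 : 1 ≤ v.length := List.length_pos_iff.mpr (hFeps v hvF)
  obtain ⟨u, -, hu⟩ := hgen ((v.map ψ).prod)⁻¹
  set z := v ++ u with hzdef
  have hz : (z.map ψ).prod = 1 := by
    rw [hzdef, List.map_append, List.prod_append, hu]
    simp
  have hvz : v <+: z := List.prefix_append v u
  have hvzlen : v.length ≤ z.length := hvz.length_le
  have ht1 : 1 ≤ z.length := le_trans hv1 hvzlen
  set LF : Set (List A) := {w : List A | (w.map ψ).prod ∈ K ∧ Avoids F w} with hLF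
  set L : Set (List A) := {w : List A | (w.map ψ).prod ∈ K} with hLdef
  set H := Real.log (Fintype.card A) with hHdef
  have hH0 : 0 ≤ H := Real.log_nonneg (by exact_mod_cast Fintype.card_pos)
  -- words of every length `k * z.length` in `L`
  have hzrep : ∀ k : ℕ, ∃ w : List A, w.length = k * z.length ∧ (w.map ψ).prod = 1 := by
    intro k
    induction k with
    | zero => exact ⟨[], by simp, by simp⟩
    | succ k ih =>
        obtain ⟨w, hl, hp⟩ := ih
        refine ⟨z ++ w, ?_, ?_⟩
        · rw [List.length_append, hl]; ring
        · rw [List.map_append, List.prod_append, hz, hp, one_mul]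
  have hL0 : (0 : EReal) ≤ entropy L := by
    rw [S11.entropy_eq]
    apply Filter.le_limsup_of_frequently_le _ (by isBoundedDefault)
    rw [Filter.frequently_atTop]
    intro b
    refine ⟨b * z.length, Nat.le_mul_of_pos_right b ht1, ?_⟩
    apply S11.fterm_nonneg
    obtain ⟨w, hl, hp⟩ := hzrep b
    rw [S11.cnt, Nat.one_le_iff_ne_zero, ← Nat.pos_iff_ne_zero,
      Set.ncard_pos ((List.finite_length_eq A _).subset (fun x hx => hx.2))]
    exact ⟨w, ⟨by rw [Set.mem_setOf_eq, hp]; exact one_mem K, hl⟩⟩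
  by_contra hcon
  push_neg at hcon
  have hub : entropy LF ≤ (H : EReal) := S11.entropy_le LF
  have hbot : entropy LF ≠ ⊥ := by
    intro h
    rw [h] at hcon
    exact absurd (le_antisymm hcon (le_trans bot_le hL0)) (by
      intro hh
      have := hL0.trans_eq hh
      simp at this)
  have htop : entropy LF ≠ ⊤ := fun h => by rw [h] at hub; exact absurd hub (by simp)
  set h' := (entropy LF).toReal with hh'def
  have hh' : entropy LF = (h' : EReal) := (EReal.coe_toReal htop hbot).symm
  have hh'H : h' ≤ H := by
    rw [hh'] at hub
    exact_mod_cast hub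
  set E := max 2 ⌈Real.exp (H * z.length + 1)⌉₊ with hEdef
  have hE2 : 2 ≤ E := le_max_left _ _
  have hlogE : H * z.length + 1 ≤ Real.log E := by
    have h1 : Real.exp (H * z.length + 1) ≤ (E : ℝ) := by
      calc Real.exp (H * z.length + 1) ≤ (⌈Real.exp (H * z.length + 1)⌉₊ : ℝ) :=
            Nat.le_ceil _
        _ ≤ (E : ℝ) := by exact_mod_cast le_max_right 2 _
    calc H * z.length + 1 = Real.log (Real.exp (H * z.length + 1)) :=
          (Real.log_exp _).symm
      _ ≤ Real.log E := Real.log_le_log (Real.exp_pos _) h1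
  set δ := 1 / (4 * (v.length : ℝ) * E * (1 + z.length)) with hδdef
  have hmR : (1 : ℝ) ≤ v.length := by exact_mod_cast hv1
  have hER : (2 : ℝ) ≤ E := by exact_mod_cast hE2
  have htR : (1 : ℝ) ≤ z.length := by exact_mod_cast ht1
  have hδpos : 0 < δ := by
    rw [hδdef]
    apply div_pos one_pos
    have h4 : (0:ℝ) < 4 * (v.length : ℝ) := by linarith
    have h5 : (0:ℝ) < 4 * (v.length : ℝ) * E := by nlinarith
    nlinarith
  set c := h' - δ / 2 with hcdef
  have hcH : c ≤ H := by rw [hcdef]; linarith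
  have hch' : c < h' := by rw [hcdef]; linarith
  have hclt : (c : EReal) < Filter.atTop.limsup (S11.fterm LF) := by
    rw [← S11.entropy_eq, hh']
    exact_mod_cast hch'
  have hfreq := Filter.frequently_lt_of_lt_limsup (by isBoundedDefault) hclt
  have hfreq2 : ∃ᶠ N in Filter.atTop, ((c + δ : ℝ) : EReal) ≤ S11.fterm L N := by
    rw [Filter.frequently_atTop] at hfreq ⊢
    intro b
    obtain ⟨n, hnb, hcn⟩ := hfreq (max b (4 * v.length * E))
    refine ⟨n + z.length * (n / (2 * v.length * E)), ?_, ?_⟩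
    · calc b ≤ max b (4 * v.length * E) := le_max_left _ _
        _ ≤ n := hnb
        _ ≤ _ := Nat.le_add_right _ _
    · exact S11.key_estimate K ψ F hvF hvz hv1 hz hvzlen E hE2 hcH hH0 hlogE hδdef
        n (le_trans (le_max_right _ _) hnb) hcn
  have hfin : ((c + δ : ℝ) : EReal) ≤ entropy L := by
    rw [S11.entropy_eq]
    exact Filter.le_limsup_of_frequently_le hfreq2 (by isBoundedDefault)
  have hle : ((c + δ : ℝ) : EReal) ≤ (h' : EReal) := le_trans hfin (le_trans hcon hh'.le)
  have : c + δ ≤ h' := EReal.coe_le_coe_iff.mp hle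
  rw [hcdef] at this
  linarith
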